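/- Sets where the pairwise energy is convex (Proposition 5.2): let W : 𝕋^d → ℝ be continuous and let W(x) = W⁺(x) + K(x) + 2c be an admissible dual decomposition. Let S ⊆ 𝕋^d be a closed set such that W⁺(x − y) = 0 for all x, y ∈ S. Then for all probability measures ρ₁, ρ₂ on 𝕋^d supported in S and all λ ∈ [0,1], E(λρ₁ + (1−λ)ρ₂) ≤ λ E(ρ₁) + (1−λ) E(ρ₂); that is, the pairwise energy E is convex when restricted to probability measures supported in S. -/

import Mathlib

open MeasureTheory Real
open scoped ENNReal

theorem cos2pi_periodic : Function.Periodic (fun t : ℝ => Real.cos (2 * Real.pi * t)) 1 := by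
  intro x; simp [mul_add, Real.cos_add_two_pi]

theorem sin2pi_periodic : Function.Periodic (fun t : ℝ => Real.sin (2 * Real.pi * t)) 1 := by
  intro x; simp [mul_add, Real.sin_add_two_pi]

/-- The function `x ↦ cos (2π x)` on the circle `ℝ/ℤ`. -/
noncomputable def cosA : AddCircle (1 : ℝ) → ℝ := cos2pi_periodic.lift

/-- The function `x ↦ sin (2π x)` on the circle `ℝ/ℤ`. -/
noncomputable def sinA : AddCircle (1 : ℝ) → ℝ := sin2pi_periodic.lift

/-- The `d`-dimensional torus `𝕋^d = ℝ^d/ℤ^d`, with its Haar probability measure `volume`. -/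
abbrev Torus (d : ℕ) := Fin d → AddCircle (1 : ℝ)

/-- `cos (2π k·x)` for `k ∈ ℤ^d` and `x ∈ 𝕋^d`. -/
noncomputable def tcos {d : ℕ} (k : Fin d → ℤ) (x : Torus d) : ℝ := cosA (∑ i, k i • x i)

/-- `sin (2π k·x)` for `k ∈ ℤ^d` and `x ∈ 𝕋^d`. -/
noncomputable def tsin {d : ℕ} (k : Fin d → ℤ) (x : Torus d) : ℝ := sinA (∑ i, k i • x i)

/-- The pairwise interaction energy `E(ρ) = (1/2) ∫∫ W(x - y) dρ(x) dρ(y)`. -/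
noncomputable def energy {d : ℕ} (W : Torus d → ℝ) (ρ : Measure (Torus d)) : ℝ :=
  (1/2) * ∫ x, ∫ y, W (x - y) ∂ρ ∂ρ

/-!
Convexity of `E` on measures supported in `S` is the positive semidefiniteness of the
cross-energy `I(μ, ν) = ∫∫ W(x - y) dν(y) dμ(x)` there: expanding the mixture gives
`λE(ρ₁) + (1-λ)E(ρ₂) - E(λρ₁ + (1-λ)ρ₂) = λ(1-λ)/2 · (I(ρ₁,ρ₁) + I(ρ₂,ρ₂) - I(ρ₁,ρ₂) - I(ρ₂,ρ₁))`.
On `S × S` the term `W⁺(x - y)` vanishes, and expanding `cos 2πk·(x - y)` turns `I(μ, ν)` into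
`Σ aₖ (Cₖ(μ) Cₖ(ν) + Sₖ(μ) Sₖ(ν)) + 2c` in terms of the cosine and sine moments of `μ, ν`, so
the bracket equals `Σ aₖ ((Cₖ(ρ₁) - Cₖ(ρ₂))² + (Sₖ(ρ₁) - Sₖ(ρ₂))²) ≥ 0`.
-/

lemma continuous_cosA : Continuous cosA :=
  Continuous.quotient_liftOn' (by fun_prop) _

lemma continuous_sinA : Continuous sinA :=
  Continuous.quotient_liftOn' (by fun_prop) _

lemma cosA_sub (x y : AddCircle (1 : ℝ)) : cosA (x - y) = cosA x * cosA y + sinA x * sinA y := by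
  induction x using QuotientAddGroup.induction_on with | H t =>
  induction y using QuotientAddGroup.induction_on with | H s =>
  rw [← QuotientAddGroup.mk_sub]
  show cos (2 * π * (t - s)) = cos (2 * π * t) * cos (2 * π * s) + sin (2 * π * t) * sin (2 * π * s)
  rw [mul_sub, cos_sub]

lemma abs_cosA_le_one (x : AddCircle (1 : ℝ)) : |cosA x| ≤ 1 := by
  induction x using QuotientAddGroup.induction_on with | H t => exact abs_cos_le_one _

lemma abs_sinA_le_one (x : AddCircle (1 : ℝ)) : |sinA x| ≤ 1 := by
  induction x using QuotientAddGroup.induction_on with | H t => exact abs_sin_le_one _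

section Torus

variable {d : ℕ}

@[fun_prop]
lemma continuous_tcos (k : Fin d → ℤ) : Continuous (tcos k) :=
  continuous_cosA.comp (by fun_prop)

@[fun_prop]
lemma continuous_tsin (k : Fin d → ℤ) : Continuous (tsin k) :=
  continuous_sinA.comp (by fun_prop)

lemma abs_tcos_le_one (k : Fin d → ℤ) (x : Torus d) : |tcos k x| ≤ 1 := abs_cosA_le_one _

lemma abs_tsin_le_one (k : Fin d → ℤ) (x : Torus d) : |tsin k x| ≤ 1 := abs_sinA_le_one _

lemma tcos_sub (k : Fin d → ℤ) (x y : Torus d) :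
    tcos k (x - y) = tcos k x * tcos k y + tsin k x * tsin k y := by
  simp only [tcos, tsin, Pi.sub_apply, smul_sub, Finset.sum_sub_distrib, cosA_sub]

end Torus

lemma abs_mul_add_mul_le_two {x y u v : ℝ} (hx : |x| ≤ 1) (hy : |y| ≤ 1) (hu : |u| ≤ 1)
    (hv : |v| ≤ 1) : |x * y + u * v| ≤ 2 := by
  have hxy : |x * y| ≤ 1 := by rw [abs_mul]; exact mul_le_one₀ hx (abs_nonneg y) hy
  have huv : |u * v| ≤ 1 := by rw [abs_mul]; exact mul_le_one₀ hu (abs_nonneg v) hv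
  linarith [abs_add_le (x * y) (u * v)]

section BoundedSeries

variable {ι X : Type*} {a : ι → ℝ} {C : ℝ}

lemma Summable.mul_of_abs_le (ha : Summable a) {b : ι → ℝ} (hb : ∀ k, |b k| ≤ C) :
    Summable fun k => a k * b k :=
  (ha.abs.mul_right C).of_norm_bounded fun k => by
    rw [norm_mul, Real.norm_eq_abs, Real.norm_eq_abs]
    exact mul_le_mul_of_nonneg_left (hb k) (abs_nonneg _)

lemma continuous_tsum_mul [TopologicalSpace X] {f : ι → X → ℝ} (ha : Summable a)
    (hf : ∀ k, Continuous (f k)) (hC : ∀ k x, |f k x| ≤ C) :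
    Continuous fun x => ∑' k, a k * f k x :=
  continuous_tsum (fun k => continuous_const.mul (hf k)) (ha.abs.mul_right C) fun k x => by
    rw [norm_mul, Real.norm_eq_abs, Real.norm_eq_abs]
    exact mul_le_mul_of_nonneg_left (hC k x) (abs_nonneg _)

lemma integral_tsum_mul [Countable ι] [MeasurableSpace X] (μ : Measure X) [IsFiniteMeasure μ]
    {f : ι → X → ℝ} (ha : Summable a) (hf : ∀ k, AEStronglyMeasurable (f k) μ)
    (hC : ∀ k x, |f k x| ≤ C) :
    ∫ x, ∑' k, a k * f k x ∂μ = ∑' k, a k * ∫ x, f k x ∂μ := by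
  have hint : ∀ k, Integrable (fun x => a k * f k x) μ := fun k =>
    (Integrable.of_bound (hf k) C (ae_of_all _ (hC k))).const_mul (a k)
  have hnorm : Summable fun k => ∫ x, ‖a k * f k x‖ ∂μ := by
    refine (ha.abs.mul_right (C * μ.real Set.univ)).of_norm_bounded fun k => ?_
    rw [← mul_assoc]
    refine norm_integral_le_of_norm_le_const (ae_of_all _ fun x => ?_)
    rw [norm_norm, norm_mul, Real.norm_eq_abs, Real.norm_eq_abs]
    exact mul_le_mul_of_nonneg_left (hC k x) (abs_nonneg _)
  rw [← integral_tsum_of_summable_integral_norm hint hnorm]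
  exact tsum_congr fun k => integral_const_mul _ _

lemma tsum_cross_le_of_nonneg {a : ι → ℝ} (ha : ∀ k, 0 ≤ a k) (hs : Summable a)
    {u₁ v₁ u₂ v₂ : ι → ℝ} (hu₁ : ∀ k, |u₁ k| ≤ 1) (hv₁ : ∀ k, |v₁ k| ≤ 1)
    (hu₂ : ∀ k, |u₂ k| ≤ 1) (hv₂ : ∀ k, |v₂ k| ≤ 1) :
    ∑' k, a k * (u₁ k * u₂ k + v₁ k * v₂ k) + ∑' k, a k * (u₂ k * u₁ k + v₂ k * v₁ k)
      ≤ ∑' k, a k * (u₁ k * u₁ k + v₁ k * v₁ k) + ∑' k, a k * (u₂ k * u₂ k + v₂ k * v₂ k) := by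
  have hsum : ∀ {u v u' v' : ι → ℝ}, (∀ k, |u k| ≤ 1) → (∀ k, |v k| ≤ 1) → (∀ k, |u' k| ≤ 1) →
      (∀ k, |v' k| ≤ 1) → Summable fun k => a k * (u k * u' k + v k * v' k) :=
    fun hu hv hu' hv' => hs.mul_of_abs_le fun k =>
      abs_mul_add_mul_le_two (hu k) (hu' k) (hv k) (hv' k)
  rw [← (hsum hu₁ hv₁ hu₂ hv₂).tsum_add (hsum hu₂ hv₂ hu₁ hv₁),
    ← (hsum hu₁ hv₁ hu₁ hv₁).tsum_add (hsum hu₂ hv₂ hu₂ hv₂)]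
  refine ((hsum hu₁ hv₁ hu₂ hv₂).add (hsum hu₂ hv₂ hu₁ hv₁)).tsum_le_tsum (fun k => ?_)
    ((hsum hu₁ hv₁ hu₁ hv₁).add (hsum hu₂ hv₂ hu₂ hv₂))
  nlinarith [mul_nonneg (ha k) (add_nonneg (sq_nonneg (u₁ k - u₂ k)) (sq_nonneg (v₁ k - v₂ k)))]

end BoundedSeries

section Interaction

variable {X : Type*} [MeasurableSpace X]

noncomputable def interaction (F : X → X → ℝ) (μ ν : Measure X) : ℝ := ∫ x, ∫ y, F x y ∂ν ∂μ

lemma integral_ofReal_smul_add_ofReal_smul {μ₁ μ₂ : Measure X} {f : X → ℝ}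
    (h₁ : Integrable f μ₁) (h₂ : Integrable f μ₂) {l m : ℝ} (hl : 0 ≤ l) (hm : 0 ≤ m) :
    ∫ x, f x ∂(ENNReal.ofReal l • μ₁ + ENNReal.ofReal m • μ₂)
      = l * ∫ x, f x ∂μ₁ + m * ∫ x, f x ∂μ₂ := by
  rw [integral_add_measure (h₁.smul_measure ENNReal.ofReal_ne_top)
      (h₂.smul_measure ENNReal.ofReal_ne_top), integral_smul_measure, integral_smul_measure,
    ENNReal.toReal_ofReal hl, ENNReal.toReal_ofReal hm, smul_eq_mul, smul_eq_mul]

variable {F : X → X → ℝ} {M : ℝ}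

lemma integrable_of_bounded_kernel (hF : StronglyMeasurable (Function.uncurry F))
    (hM : ∀ x y, |F x y| ≤ M) (x : X) (ν : Measure X) [IsFiniteMeasure ν] :
    Integrable (F x) ν :=
  Integrable.of_bound (hF.comp_measurable measurable_prodMk_left).aestronglyMeasurable M
    (ae_of_all _ (hM x))

lemma integrable_integral_of_bounded_kernel (hF : StronglyMeasurable (Function.uncurry F))
    (hM : ∀ x y, |F x y| ≤ M) (μ ν : Measure X) [IsFiniteMeasure μ] [IsFiniteMeasure ν] :
    Integrable (fun x => ∫ y, F x y ∂ν) μ :=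
  Integrable.of_bound hF.integral_prod_right'.aestronglyMeasurable (M * ν.real Set.univ)
    (ae_of_all _ fun x => norm_integral_le_of_norm_le_const (ae_of_all _ (hM x)))

lemma interaction_convexComb_left (hF : StronglyMeasurable (Function.uncurry F))
    (hM : ∀ x y, |F x y| ≤ M) (μ₁ μ₂ ν : Measure X) [IsFiniteMeasure μ₁] [IsFiniteMeasure μ₂]
    [IsFiniteMeasure ν] {l m : ℝ} (hl : 0 ≤ l) (hm : 0 ≤ m) :
    interaction F (ENNReal.ofReal l • μ₁ + ENNReal.ofReal m • μ₂) ν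
      = l * interaction F μ₁ ν + m * interaction F μ₂ ν :=
  integral_ofReal_smul_add_ofReal_smul (integrable_integral_of_bounded_kernel hF hM μ₁ ν)
    (integrable_integral_of_bounded_kernel hF hM μ₂ ν) hl hm

lemma interaction_convexComb_right (hF : StronglyMeasurable (Function.uncurry F))
    (hM : ∀ x y, |F x y| ≤ M) (μ ν₁ ν₂ : Measure X) [IsFiniteMeasure μ] [IsFiniteMeasure ν₁]
    [IsFiniteMeasure ν₂] {l m : ℝ} (hl : 0 ≤ l) (hm : 0 ≤ m) :
    interaction F μ (ENNReal.ofReal l • ν₁ + ENNReal.ofReal m • ν₂)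
      = l * interaction F μ ν₁ + m * interaction F μ ν₂ := by
  have hint := integrable_integral_of_bounded_kernel hF hM μ
  unfold interaction
  simp_rw [integral_ofReal_smul_add_ofReal_smul (integrable_of_bounded_kernel hF hM _ ν₁)
    (integrable_of_bounded_kernel hF hM _ ν₂) hl hm]
  rw [integral_add ((hint ν₁).const_mul l) ((hint ν₂).const_mul m), integral_const_mul,
    integral_const_mul]

lemma interaction_convexComb_le (hF : StronglyMeasurable (Function.uncurry F))
    (hM : ∀ x y, |F x y| ≤ M) (μ₁ μ₂ : Measure X) [IsFiniteMeasure μ₁] [IsFiniteMeasure μ₂]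
    {l : ℝ} (hl0 : 0 ≤ l) (hl1 : l ≤ 1)
    (hcross : interaction F μ₁ μ₂ + interaction F μ₂ μ₁
      ≤ interaction F μ₁ μ₁ + interaction F μ₂ μ₂) :
    interaction F (ENNReal.ofReal l • μ₁ + ENNReal.ofReal (1 - l) • μ₂)
        (ENNReal.ofReal l • μ₁ + ENNReal.ofReal (1 - l) • μ₂)
      ≤ l * interaction F μ₁ μ₁ + (1 - l) * interaction F μ₂ μ₂ := by
  have hm : 0 ≤ 1 - l := sub_nonneg.2 hl1
  have : IsFiniteMeasure (ENNReal.ofReal l • μ₁) := μ₁.smul_finite ENNReal.ofReal_ne_top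
  have : IsFiniteMeasure (ENNReal.ofReal (1 - l) • μ₂) := μ₂.smul_finite ENNReal.ofReal_ne_top
  rw [interaction_convexComb_left hF hM _ _ _ hl0 hm,
    interaction_convexComb_right hF hM _ _ _ hl0 hm, interaction_convexComb_right hF hM _ _ _ hl0 hm]
  nlinarith [mul_nonneg (mul_nonneg hl0 hm) (sub_nonneg.2 hcross)]

end Interaction

section Moments

variable {d : ℕ}

noncomputable def cosMoment (μ : Measure (Torus d)) (k : Fin d → ℤ) : ℝ := ∫ x, tcos k x ∂μ

noncomputable def sinMoment (μ : Measure (Torus d)) (k : Fin d → ℤ) : ℝ := ∫ x, tsin k x ∂μ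

lemma abs_cosMoment_le_one (μ : Measure (Torus d)) [IsProbabilityMeasure μ] (k : Fin d → ℤ) :
    |cosMoment μ k| ≤ 1 := by
  simpa [cosMoment] using norm_integral_le_of_norm_le_const (μ := μ) (f := tcos k)
    (ae_of_all _ fun x => (abs_tcos_le_one k x : ‖tcos k x‖ ≤ 1))

lemma abs_sinMoment_le_one (μ : Measure (Torus d)) [IsProbabilityMeasure μ] (k : Fin d → ℤ) :
    |sinMoment μ k| ≤ 1 := by
  simpa [sinMoment] using norm_integral_le_of_norm_le_const (μ := μ) (f := tsin k)
    (ae_of_all _ fun x => (abs_tsin_le_one k x : ‖tsin k x‖ ≤ 1))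

variable {a : (Fin d → ℤ) → ℝ}

lemma integral_tsum_tcos_sub (ha : Summable a) (ν : Measure (Torus d)) [IsFiniteMeasure ν]
    (x : Torus d) :
    ∫ y, ∑' k, a k * tcos k (x - y) ∂ν
      = ∑' k, a k * (tcos k x * cosMoment ν k + tsin k x * sinMoment ν k) := by
  rw [integral_tsum_mul ν ha (f := fun k y => tcos k (x - y))
    (fun k => (by fun_prop : Continuous _).aestronglyMeasurable) fun k y => abs_tcos_le_one k _]
  refine tsum_congr fun k => ?_
  simp_rw [tcos_sub]
  rw [integral_add (((continuous_tcos k).integrable_of_hasCompactSupport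
      (.of_compactSpace _)).const_mul _)
    (((continuous_tsin k).integrable_of_hasCompactSupport (.of_compactSpace _)).const_mul _),
    integral_const_mul, integral_const_mul, cosMoment, sinMoment]

lemma integral_tsum_tcos_mul (ha : Summable a) (μ : Measure (Torus d)) [IsFiniteMeasure μ]
    {u v : (Fin d → ℤ) → ℝ} (hu : ∀ k, |u k| ≤ 1) (hv : ∀ k, |v k| ≤ 1) :
    ∫ x, ∑' k, a k * (tcos k x * u k + tsin k x * v k) ∂μ
      = ∑' k, a k * (cosMoment μ k * u k + sinMoment μ k * v k) := by
  rw [integral_tsum_mul μ ha (fun k => (by fun_prop : Continuous _).aestronglyMeasurable)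
    fun k x => abs_mul_add_mul_le_two (abs_tcos_le_one k x) (hu k) (abs_tsin_le_one k x) (hv k)]
  refine tsum_congr fun k => ?_
  rw [integral_add (((continuous_tcos k).integrable_of_hasCompactSupport
      (.of_compactSpace _)).mul_const _)
    (((continuous_tsin k).integrable_of_hasCompactSupport (.of_compactSpace _)).mul_const _),
    integral_mul_const, integral_mul_const, cosMoment, sinMoment]

end Moments

lemma interaction_eq_tsum_of_supported {d : ℕ} {W Wp : Torus d → ℝ} {a : (Fin d → ℤ) → ℝ}
    {c : ℝ} (ha : Summable a)
    (hdecomp : ∀ x, W x = Wp x + (∑' k : Fin d → ℤ, a k * tcos k x) + 2 * c)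
    {S : Set (Torus d)} (hWpS : ∀ x ∈ S, ∀ y ∈ S, Wp (x - y) = 0)
    (μ ν : Measure (Torus d)) [IsProbabilityMeasure μ] [IsProbabilityMeasure ν]
    (hμ : μ Sᶜ = 0) (hν : ν Sᶜ = 0) :
    interaction (fun x y => W (x - y)) μ ν
      = ∑' k, a k * (cosMoment μ k * cosMoment ν k + sinMoment μ k * sinMoment ν k) + 2 * c := by
  have hK : ∀ x, Continuous fun y => ∑' k, a k * tcos k (x - y) := fun x =>
    continuous_tsum_mul ha (fun k => by fun_prop) fun k y => abs_tcos_le_one k _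
  have hinner : ∀ x ∈ S, ∫ y, W (x - y) ∂ν
      = ∑' k, a k * (tcos k x * cosMoment ν k + tsin k x * sinMoment ν k) + 2 * c := by
    intro x hx
    calc ∫ y, W (x - y) ∂ν = ∫ y, (∑' k, a k * tcos k (x - y)) + 2 * c ∂ν := by
          refine integral_congr_ae ?_
          filter_upwards [mem_ae_iff.2 hν] with y hy
          rw [hdecomp, hWpS x hx y hy, zero_add]
      _ = _ := by
          rw [integral_add ((hK x).integrable_of_hasCompactSupport (.of_compactSpace _))
            (integrable_const _), integral_tsum_tcos_sub ha, integral_const, probReal_univ,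
            one_smul]
  have hcos := abs_cosMoment_le_one ν
  have hsin := abs_sinMoment_le_one ν
  have hcont :
      Continuous fun x => ∑' k, a k * (tcos k x * cosMoment ν k + tsin k x * sinMoment ν k) :=
    continuous_tsum_mul ha (fun k => by fun_prop) fun k x =>
      abs_mul_add_mul_le_two (abs_tcos_le_one k x) (hcos k) (abs_tsin_le_one k x) (hsin k)
  calc interaction (fun x y => W (x - y)) μ ν
      = ∫ x, ∑' k, a k * (tcos k x * cosMoment ν k + tsin k x * sinMoment ν k) + 2 * c ∂μ :=
        integral_congr_ae (by filter_upwards [mem_ae_iff.2 hμ] with x hx using hinner x hx)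
    _ = _ := by
        rw [integral_add (hcont.integrable_of_hasCompactSupport (.of_compactSpace _))
          (integrable_const _), integral_tsum_tcos_mul ha μ hcos hsin, integral_const,
          probReal_univ, one_smul]

theorem stmt11_general {d : ℕ} (W Wp : Torus d → ℝ) (a : (Fin d → ℤ) → ℝ) (c : ℝ)
    (hWc : Continuous W) (ha_nonneg : ∀ k, k ≠ 0 → 0 ≤ a k) (ha0 : a 0 = 0)
    (ha_sum : Summable a)
    (hdecomp : ∀ x, W x = Wp x + (∑' k : Fin d → ℤ, a k * tcos k x) + 2 * c)
    (S : Set (Torus d)) (hWpS : ∀ x ∈ S, ∀ y ∈ S, Wp (x - y) = 0)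
    (ρ₁ ρ₂ : Measure (Torus d)) [IsProbabilityMeasure ρ₁] [IsProbabilityMeasure ρ₂]
    (hρ₁ : ρ₁ Sᶜ = 0) (hρ₂ : ρ₂ Sᶜ = 0) (l : ℝ) (hl0 : 0 ≤ l) (hl1 : l ≤ 1) :
    energy W (ENNReal.ofReal l • ρ₁ + ENNReal.ofReal (1 - l) • ρ₂)
      ≤ l * energy W ρ₁ + (1 - l) * energy W ρ₂ := by
  have ha : ∀ k, 0 ≤ a k := fun k => (eq_or_ne k 0).elim (fun hk => hk ▸ ha0.ge) (ha_nonneg k)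
  obtain ⟨M, hM⟩ := isCompact_univ.exists_bound_of_continuousOn hWc.continuousOn
  have hFmeas : StronglyMeasurable (Function.uncurry fun x y : Torus d => W (x - y)) :=
    (hWc.comp (continuous_fst.sub continuous_snd)).stronglyMeasurable
  have hcross := tsum_cross_le_of_nonneg ha ha_sum (abs_cosMoment_le_one ρ₁)
    (abs_sinMoment_le_one ρ₁) (abs_cosMoment_le_one ρ₂) (abs_sinMoment_le_one ρ₂)
  have hI := interaction_eq_tsum_of_supported ha_sum hdecomp hWpS
  have hconv := interaction_convexComb_le hFmeas (fun x y => hM (x - y) trivial) ρ₁ ρ₂ hl0 hl1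
    (by rw [hI ρ₁ ρ₂ hρ₁ hρ₂, hI ρ₂ ρ₁ hρ₂ hρ₁, hI ρ₁ ρ₁ hρ₁ hρ₁, hI ρ₂ ρ₂ hρ₂ hρ₂]; linarith)
  unfold interaction at hconv
  unfold energy
  linarith

/-- Proposition 5.2: if `W = W⁺ + K + 2c` is an admissible dual decomposition and `S` is a
closed set with `W⁺(x - y) = 0` for all `x, y ∈ S`, then the pairwise energy `E` is convex
on probability measures supported in `S`. -/
theorem stmt11 {d : ℕ} (W Wp : Torus d → ℝ) (a : (Fin d → ℤ) → ℝ) (c : ℝ)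
    (hWc : Continuous W) (hWpc : Continuous Wp) (hWp : ∀ x, 0 ≤ Wp x)
    (ha_symm : ∀ k, a (-k) = a k) (ha_nonneg : ∀ k, k ≠ 0 → 0 ≤ a k) (ha0 : a 0 = 0)
    (ha_sum : Summable a)
    (hdecomp : ∀ x, W x = Wp x + (∑' k : Fin d → ℤ, a k * tcos k x) + 2 * c)
    (S : Set (Torus d)) (hS : IsClosed S) (hWpS : ∀ x ∈ S, ∀ y ∈ S, Wp (x - y) = 0)
    (ρ₁ ρ₂ : Measure (Torus d)) [IsProbabilityMeasure ρ₁] [IsProbabilityMeasure ρ₂]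
    (hρ₁ : ρ₁ Sᶜ = 0) (hρ₂ : ρ₂ Sᶜ = 0) (l : ℝ) (hl0 : 0 ≤ l) (hl1 : l ≤ 1) :
    energy W (ENNReal.ofReal l • ρ₁ + ENNReal.ofReal (1 - l) • ρ₂)
      ≤ l * energy W ρ₁ + (1 - l) * energy W ρ₂ :=
  stmt11_general W Wp a c hWc ha_nonneg ha0 ha_sum hdecomp S hWpS ρ₁ ρ₂ hρ₁ hρ₂ l hl0 hl1
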